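/- (Seven-term recurrence for the derivatives of angular Teukolsky solutions.) Let S : (−1,1) → ℂ be infinitely differentiable and satisfy the angular Teukolsky equation on (−1,1), let x₀ ∈ (−1,1), and write ϑ₀ = ϑ(x₀) = 1−x₀². Then for every integer n ≥ 4: ϑ₀² S^{(n+2)}(x₀) − 2(2n+1)x₀ϑ₀ S^{(n+1)}(x₀) + [2n²(3x₀²−1) + W_θ(x₀)] S^{(n)}(x₀) + [2n(2n²−3n+1)x₀ + n·W_θ′(x₀)] S^{(n−1)}(x₀) + [n(n−1)²(n−2) + n(n−1)W_θ″(x₀)/2] S^{(n−2)}(x₀) + 2c·n(n−1)(n−2)(s−2cx₀) S^{(n−3)}(x₀) − c²n(n−1)(n−2)(n−3) S^{(n−4)}(x₀) = 0, where S^{(k)} denotes the k-th derivative of S. -/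

import Mathlib

open Set Complex

/-- `V_θ(x) = (cx)² − 2csx + s + 𝒜 − (m+sx)²/(1−x²)`. -/
noncomputable def Vθfun (s m : ℤ) (c 𝒜 : ℂ) (x : ℝ) : ℂ :=
  (c * (x : ℂ)) ^ 2 - 2 * c * (s : ℂ) * (x : ℂ) + (s : ℂ) + 𝒜
    - ((m : ℂ) + (s : ℂ) * (x : ℂ)) ^ 2 / (1 - (x : ℂ) ^ 2)

/-- `W_θ(x) = ϑ(x)V_θ(x) = (1−x²)((cx)² − 2csx + s + 𝒜) − (m+sx)²`, a polynomial in `x`. -/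
noncomputable def Wθfun (s m : ℤ) (c 𝒜 : ℂ) (x : ℝ) : ℂ :=
  (1 - (x : ℂ) ^ 2) * ((c * (x : ℂ)) ^ 2 - 2 * c * (s : ℂ) * (x : ℂ) + (s : ℂ) + 𝒜)
    - ((m : ℂ) + (s : ℂ) * (x : ℂ)) ^ 2

section Aux

open Finset

private lemma powX_hasDerivAt (k : ℕ) (x : ℝ) :
    HasDerivAt (fun y : ℝ => (y:ℂ) ^ k) ((k:ℂ) * (x:ℂ) ^ (k-1)) x :=
  (hasDerivAt_pow k ((x:ℂ))).comp_ofReal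

private lemma poly_hasDerivAt (a b d e f : ℂ) (x : ℝ) :
    HasDerivAt (fun y : ℝ => a * (y:ℂ)^4 + b * (y:ℂ)^3 + d * (y:ℂ)^2 + e * (y:ℂ) + f)
      (4*a*(x:ℂ)^3 + 3*b*(x:ℂ)^2 + 2*d*(x:ℂ) + e) x := by
  have h1 := (powX_hasDerivAt 4 x).const_mul a
  have h2 := (powX_hasDerivAt 3 x).const_mul b
  have h3 := (powX_hasDerivAt 2 x).const_mul d
  have h4 := (powX_hasDerivAt 1 x).const_mul e
  have h := (((h1.add h2).add h3).add h4).add_const f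
  have h' : HasDerivAt (fun y : ℝ => a * (y:ℂ)^4 + b * (y:ℂ)^3 + d * (y:ℂ)^2 + e * (y:ℂ) + f)
      (a * ((4:ℂ) * (x:ℂ)^3) + b * ((3:ℂ) * (x:ℂ)^2) + d * ((2:ℂ) * (x:ℂ)^1)
        + e * ((1:ℂ) * (x:ℂ)^0)) x := by
    convert h using 2 with y
    · rfl
    · simp only [Pi.add_apply]; ring
    · norm_num
    · norm_num
  convert h' using 1
  ring

/-- chain of derivatives of `(1-x²)²`. -/
private noncomputable def Pc : ℕ → ℝ → ℂ
  | 0 => fun y => 1 * (y:ℂ)^4 + 0 * (y:ℂ)^3 + (-2) * (y:ℂ)^2 + 0 * (y:ℂ) + 1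
  | 1 => fun y => 0 * (y:ℂ)^4 + 4 * (y:ℂ)^3 + 0 * (y:ℂ)^2 + (-4) * (y:ℂ) + 0
  | 2 => fun y => 0 * (y:ℂ)^4 + 0 * (y:ℂ)^3 + 12 * (y:ℂ)^2 + 0 * (y:ℂ) + (-4)
  | 3 => fun y => 0 * (y:ℂ)^4 + 0 * (y:ℂ)^3 + 0 * (y:ℂ)^2 + 24 * (y:ℂ) + 0
  | 4 => fun y => 0 * (y:ℂ)^4 + 0 * (y:ℂ)^3 + 0 * (y:ℂ)^2 + 0 * (y:ℂ) + 24
  | _ + 5 => fun _ => 0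

/-- chain of derivatives of `-2x(1-x²)`. -/
private noncomputable def Qc : ℕ → ℝ → ℂ
  | 0 => fun y => 0 * (y:ℂ)^4 + 2 * (y:ℂ)^3 + 0 * (y:ℂ)^2 + (-2) * (y:ℂ) + 0
  | 1 => fun y => 0 * (y:ℂ)^4 + 0 * (y:ℂ)^3 + 6 * (y:ℂ)^2 + 0 * (y:ℂ) + (-2)
  | 2 => fun y => 0 * (y:ℂ)^4 + 0 * (y:ℂ)^3 + 0 * (y:ℂ)^2 + 12 * (y:ℂ) + 0
  | 3 => fun y => 0 * (y:ℂ)^4 + 0 * (y:ℂ)^3 + 0 * (y:ℂ)^2 + 0 * (y:ℂ) + 12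
  | _ + 4 => fun _ => 0

/-- chain of derivatives of `W_θ`. -/
private noncomputable def wc (s m : ℤ) (c 𝒜 : ℂ) : ℕ → ℝ → ℂ
  | 0 => fun y => (-(c^2)) * (y:ℂ)^4 + (2*c*(s:ℂ)) * (y:ℂ)^3 + (c^2 - (s:ℂ) - 𝒜 - (s:ℂ)^2) * (y:ℂ)^2
      + (-(2*c*(s:ℂ)) - 2*(m:ℂ)*(s:ℂ)) * (y:ℂ) + ((s:ℂ) + 𝒜 - (m:ℂ)^2)
  | 1 => fun y => 0 * (y:ℂ)^4 + (-(4*c^2)) * (y:ℂ)^3 + (6*c*(s:ℂ)) * (y:ℂ)^2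
      + (2*(c^2 - (s:ℂ) - 𝒜 - (s:ℂ)^2)) * (y:ℂ) + (-(2*c*(s:ℂ)) - 2*(m:ℂ)*(s:ℂ))
  | 2 => fun y => 0 * (y:ℂ)^4 + 0 * (y:ℂ)^3 + (-(12*c^2)) * (y:ℂ)^2
      + (12*c*(s:ℂ)) * (y:ℂ) + (2*(c^2 - (s:ℂ) - 𝒜 - (s:ℂ)^2))
  | 3 => fun y => 0 * (y:ℂ)^4 + 0 * (y:ℂ)^3 + 0 * (y:ℂ)^2 + (-(24*c^2)) * (y:ℂ) + (12*c*(s:ℂ))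
  | 4 => fun y => 0 * (y:ℂ)^4 + 0 * (y:ℂ)^3 + 0 * (y:ℂ)^2 + 0 * (y:ℂ) + (-(24*c^2))
  | _ + 5 => fun _ => 0

private lemma Pc_hasDerivAt (k : ℕ) (x : ℝ) : HasDerivAt (Pc k) (Pc (k+1) x) x := by
  match k with
  | 0 => simp only [Pc]; convert poly_hasDerivAt 1 0 (-2) 0 1 x using 1; ring
  | 1 => simp only [Pc]; convert poly_hasDerivAt 0 4 0 (-4) 0 x using 1; ring
  | 2 => simp only [Pc]; convert poly_hasDerivAt 0 0 12 0 (-4) x using 1; ring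
  | 3 => simp only [Pc]; convert poly_hasDerivAt 0 0 0 24 0 x using 1; ring
  | 4 => simp only [Pc]; convert poly_hasDerivAt 0 0 0 0 24 x using 1; ring
  | (j+5) => simp only [Pc]; exact hasDerivAt_const x 0

private lemma Qc_hasDerivAt (k : ℕ) (x : ℝ) : HasDerivAt (Qc k) (Qc (k+1) x) x := by
  match k with
  | 0 => simp only [Qc]; convert poly_hasDerivAt 0 2 0 (-2) 0 x using 1; ring
  | 1 => simp only [Qc]; convert poly_hasDerivAt 0 0 6 0 (-2) x using 1; ring
  | 2 => simp only [Qc]; convert poly_hasDerivAt 0 0 0 12 0 x using 1; ring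
  | 3 => simp only [Qc]; convert poly_hasDerivAt 0 0 0 0 12 x using 1; ring
  | (j+4) => simp only [Qc]; exact hasDerivAt_const x 0

private lemma wc_hasDerivAt (s m : ℤ) (c 𝒜 : ℂ) (k : ℕ) (x : ℝ) :
    HasDerivAt (wc s m c 𝒜 k) (wc s m c 𝒜 (k+1) x) x := by
  match k with
  | 0 => simp only [wc]; convert poly_hasDerivAt _ _ _ _ _ x using 1; ring
  | 1 => simp only [wc]; convert poly_hasDerivAt _ _ _ _ _ x using 1; ring
  | 2 => simp only [wc]; convert poly_hasDerivAt _ _ _ _ _ x using 1; ring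
  | 3 => simp only [wc]; convert poly_hasDerivAt _ _ _ _ _ x using 1; ring
  | 4 => simp only [wc]; convert poly_hasDerivAt _ _ _ _ _ x using 1; ring
  | (j+5) => simp only [wc]; exact hasDerivAt_const x 0

private lemma chainstep (Φ f : ℕ → ℝ → ℂ) (x : ℝ) (n : ℕ)
    (hΦ : ∀ k, HasDerivAt (Φ k) (Φ (k+1) x) x)
    (hf : ∀ k, HasDerivAt (f k) (f (k+1) x) x) :
    HasDerivAt (fun y => ∑ k ∈ range (n+1), (n.choose k : ℂ) * (Φ k y * f (n - k) y))
      (∑ k ∈ range (n+2), ((n+1).choose k : ℂ) * (Φ k x * f (n + 1 - k) x)) x := by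
  have h1 : HasDerivAt (fun y => ∑ k ∈ range (n+1), (n.choose k : ℂ) * (Φ k y * f (n - k) y))
      (∑ k ∈ range (n+1), (n.choose k : ℂ) *
        (Φ (k+1) x * f (n-k) x + Φ k x * f (n-k+1) x)) x :=
    HasDerivAt.fun_sum fun k _ => ((hΦ k).mul (hf (n-k))).const_mul _
  convert h1 using 1
  rw [Finset.sum_range_succ' (fun k => ((n+1).choose k : ℂ) * (Φ k x * f (n+1-k) x)) (n+1)]
  have e1 : ∀ k, (n+1).choose (k+1) = n.choose k + n.choose (k+1) := fun k =>
    Nat.choose_succ_succ n k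
  have e2 : ∀ k, n + 1 - (k + 1) = n - k := fun k => Nat.succ_sub_succ n k
  simp only [e1, e2, Nat.choose_zero_right, Nat.sub_zero, Nat.cast_add, Nat.cast_one]
  have key : ∑ k ∈ range (n+1), ((n.choose (k+1) : ℂ)) * (Φ (k+1) x * f (n-k) x)
      + (Φ 0 x * f (n+1) x)
      = ∑ k ∈ range (n+1), ((n.choose k : ℂ)) * (Φ k x * f (n-k+1) x) := by
    rw [Finset.sum_range_succ' (fun k => ((n.choose k : ℂ)) * (Φ k x * f (n-k+1) x)) n]
    rw [Finset.sum_range_succ (fun k => ((n.choose (k+1) : ℂ)) * (Φ (k+1) x * f (n-k) x)) n]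
    have hz : ((n.choose (n+1) : ℂ)) = 0 := by simp [Nat.choose_succ_self]
    rw [hz]
    have hcong : ∀ k ∈ range n, ((n.choose (k+1) : ℂ)) * (Φ (k+1) x * f (n-k) x)
        = ((n.choose (k+1) : ℂ)) * (Φ (k+1) x * f (n-(k+1)+1) x) := by
      intro k hk
      rw [Finset.mem_range] at hk
      congr 3
      omega
    rw [Finset.sum_congr rfl hcong]
    simp
  calc ∑ k ∈ range (n+1), (((n.choose k:ℂ)) + ((n.choose (k+1):ℂ))) * (Φ (k+1) x * f (n-k) x)
        + 1 * (Φ 0 x * f (n+1) x)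
      = (∑ k ∈ range (n+1), ((n.choose k:ℂ)) * (Φ (k+1) x * f (n-k) x))
        + ((∑ k ∈ range (n+1), ((n.choose (k+1):ℂ)) * (Φ (k+1) x * f (n-k) x))
            + (Φ 0 x * f (n+1) x)) := by
        rw [Finset.sum_congr rfl (fun k _ => add_mul ((n.choose k:ℂ)) ((n.choose (k+1):ℂ))
          (Φ (k+1) x * f (n-k) x)), Finset.sum_add_distrib]
        ring
    _ = (∑ k ∈ range (n+1), ((n.choose k:ℂ)) * (Φ (k+1) x * f (n-k) x))
        + ∑ k ∈ range (n+1), ((n.choose k : ℂ)) * (Φ k x * f (n-k+1) x) := by rw [key]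
    _ = ∑ k ∈ range (n+1), ((n.choose k:ℂ)) * (Φ (k+1) x * f (n-k) x + Φ k x * f (n-k+1) x) := by
        rw [← Finset.sum_add_distrib]
        congr 1
        ext k
        ring

private lemma iterchain {U : Set ℝ} (hU : IsOpen U) (g : ℕ → ℝ → ℂ)
    (hg : ∀ k, ∀ x ∈ U, HasDerivAt (g k) (g (k+1) x) x) :
    ∀ n, ∀ x ∈ U, iteratedDeriv n (g 0) x = g n x := by
  intro n
  induction n with
  | zero => intro x _; simp
  | succ n ih =>
    intro x hx
    rw [iteratedDeriv_succ]
    have hev : iteratedDeriv n (g 0) =ᶠ[nhds x] g n :=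
      Filter.eventuallyEq_of_mem (hU.mem_nhds hx) ih
    rw [hev.deriv_eq]
    exact (hg n x hx).deriv

private lemma iter_zero_of_eqOn {U : Set ℝ} (hU : IsOpen U) (g : ℝ → ℂ)
    (hg : ∀ x ∈ U, g x = 0) : ∀ n, ∀ x ∈ U, iteratedDeriv n g x = 0 := by
  intro n
  induction n with
  | zero => simpa using hg
  | succ n ih =>
    intro x hx
    rw [iteratedDeriv_succ]
    have hev : iteratedDeriv n g =ᶠ[nhds x] (fun _ => (0:ℂ)) :=
      Filter.eventuallyEq_of_mem (hU.mem_nhds hx) ih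
    rw [hev.deriv_eq]
    simp

private lemma choose_two_cast (n : ℕ) : ((n.choose 2 : ℕ) : ℂ) = n * (n-1) / 2 := by
  induction n with
  | zero => simp
  | succ n ih =>
    rw [Nat.choose_succ_succ n 1]
    push_cast [ih, Nat.choose_one_right]
    ring

private lemma choose_three_cast (n : ℕ) : ((n.choose 3 : ℕ) : ℂ) = n * (n-1) * (n-2) / 6 := by
  induction n with
  | zero => simp
  | succ n ih =>
    rw [Nat.choose_succ_succ n 2]
    push_cast [ih, choose_two_cast]
    ring

private lemma choose_four_cast (n : ℕ) :
    ((n.choose 4 : ℕ) : ℂ) = n * (n-1) * (n-2) * (n-3) / 24 := by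
  induction n with
  | zero => simp
  | succ n ih =>
    rw [Nat.choose_succ_succ n 3]
    push_cast [ih, choose_three_cast]
    ring

/-- the full Leibniz chain for `ϑ²S'' - 2xϑS' + W S`. -/
private noncomputable def Tn (s m : ℤ) (c 𝒜 : ℂ) (S : ℝ → ℂ) (n : ℕ) (x : ℝ) : ℂ :=
  (∑ k ∈ range (n+1), (n.choose k : ℂ) * (Pc k x * iteratedDeriv (n-k+2) S x))
  + (∑ k ∈ range (n+1), (n.choose k : ℂ) * (Qc k x * iteratedDeriv (n-k+1) S x))
  + (∑ k ∈ range (n+1), (n.choose k : ℂ) * (wc s m c 𝒜 k x * iteratedDeriv (n-k) S x))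

end Aux

/-- Seven-term recurrence for the derivatives of solutions of the angular
Teukolsky equation. -/
theorem angular_teukolsky_derivative_recurrence
    (s m : ℤ) (c 𝒜 : ℂ)
    (S : ℝ → ℂ) (hS : ContDiffOn ℝ (⊤ : ℕ∞) S (Ioo (-1 : ℝ) 1))
    (heq : ∀ x ∈ Ioo (-1 : ℝ) 1,
      deriv (fun y : ℝ => ((1 - y ^ 2 : ℝ) : ℂ) * deriv S y) x
        + Vθfun s m c 𝒜 x * S x = 0)
    (x₀ : ℝ) (hx₀ : x₀ ∈ Ioo (-1 : ℝ) 1) :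
    ∀ n : ℕ, 4 ≤ n →
      ((1 - x₀ ^ 2 : ℝ) : ℂ) ^ 2 * iteratedDeriv (n + 2) S x₀
      - 2 * (2 * (n : ℂ) + 1) * (x₀ : ℂ) * ((1 - x₀ ^ 2 : ℝ) : ℂ)
          * iteratedDeriv (n + 1) S x₀
      + (2 * (n : ℂ) ^ 2 * (3 * (x₀ : ℂ) ^ 2 - 1) + Wθfun s m c 𝒜 x₀)
          * iteratedDeriv n S x₀
      + (2 * (n : ℂ) * (2 * (n : ℂ) ^ 2 - 3 * (n : ℂ) + 1) * (x₀ : ℂ)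
          + (n : ℂ) * deriv (Wθfun s m c 𝒜) x₀) * iteratedDeriv (n - 1) S x₀
      + ((n : ℂ) * ((n : ℂ) - 1) ^ 2 * ((n : ℂ) - 2)
          + (n : ℂ) * ((n : ℂ) - 1) * deriv (deriv (Wθfun s m c 𝒜)) x₀ / 2)
          * iteratedDeriv (n - 2) S x₀
      + 2 * c * (n : ℂ) * ((n : ℂ) - 1) * ((n : ℂ) - 2) * ((s : ℂ) - 2 * c * (x₀ : ℂ))
          * iteratedDeriv (n - 3) S x₀
      - c ^ 2 * (n : ℂ) * ((n : ℂ) - 1) * ((n : ℂ) - 2) * ((n : ℂ) - 3)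
          * iteratedDeriv (n - 4) S x₀ = 0 := by
  classical
  set U : Set ℝ := Ioo (-1 : ℝ) 1 with hUdef
  have hU : IsOpen U := isOpen_Ioo
  -- all iterated derivatives of S are smooth on U
  have hCD : ∀ j : ℕ, ContDiffOn ℝ (⊤ : ℕ∞) (iteratedDeriv j S) U := by
    intro j
    induction j with
    | zero => simpa using hS
    | succ j ih =>
      rw [iteratedDeriv_succ]
      exact ih.deriv_of_isOpen hU (by simp)
  have hD : ∀ j : ℕ, ∀ x ∈ U, HasDerivAt (iteratedDeriv j S) (iteratedDeriv (j+1) S x) x := by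
    intro j x hx
    have hdiff : DifferentiableAt ℝ (iteratedDeriv (j+1) S) x := by
      exact (((hCD (j+1)).contDiffAt (hU.mem_nhds hx)).differentiableAt (by simp))
    have hdiff' : DifferentiableAt ℝ (iteratedDeriv j S) x :=
      ((hCD j).contDiffAt (hU.mem_nhds hx)).differentiableAt (by simp)
    have := hdiff'.hasDerivAt
    rwa [iteratedDeriv_succ]
  clear hS
  -- the derivative chain of `Tn`
  have hchain : ∀ n : ℕ, ∀ x ∈ U, HasDerivAt (Tn s m c 𝒜 S n) (Tn s m c 𝒜 S (n+1) x) x := by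
    intro n x hx
    have hfP : ∀ k : ℕ, HasDerivAt (iteratedDeriv (k+2) S) (iteratedDeriv ((k+1)+2) S x) x := by
      intro k
      have h := hD (k+2) x hx
      have e : (k+2)+1 = (k+1)+2 := by omega
      rw [e] at h
      exact h
    have hfQ : ∀ k : ℕ, HasDerivAt (iteratedDeriv (k+1) S) (iteratedDeriv ((k+1)+1) S x) x :=
      fun k => hD (k+1) x hx
    have hfW : ∀ k : ℕ, HasDerivAt (iteratedDeriv k S) (iteratedDeriv (k+1) S x) x :=
      fun k => hD k x hx
    have h1 := chainstep Pc (fun j => iteratedDeriv (j+2) S) x n (fun k => Pc_hasDerivAt k x) hfP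
    have h2 := chainstep Qc (fun j => iteratedDeriv (j+1) S) x n (fun k => Qc_hasDerivAt k x) hfQ
    have h3 := chainstep (wc s m c 𝒜) (fun j => iteratedDeriv j S) x n
      (fun k => wc_hasDerivAt s m c 𝒜 k x) hfW
    exact (h1.add h2).add h3
  -- `Tn 0` vanishes on `U` (this is the Teukolsky equation multiplied by `ϑ`)
  have hT0 : ∀ x ∈ U, Tn s m c 𝒜 S 0 x = 0 := by
    intro x hx
    have hx1 : -1 < x := hx.1
    have hx2 : x < 1 := hx.2
    have hθR : (0:ℝ) < 1 - x^2 := by nlinarith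
    have hθ : ((1:ℂ) - (x:ℂ)^2) ≠ 0 := by
      have : ((1 - x^2 : ℝ) : ℂ) ≠ 0 := by
        exact_mod_cast ne_of_gt hθR
      push_cast at this
      exact this
    -- compute the derivative appearing in `heq`
    have hcoef : HasDerivAt (fun y : ℝ => ((1 - y ^ 2 : ℝ) : ℂ)) (-((2:ℂ) * (x:ℂ)^1)) x := by
      have h := (powX_hasDerivAt 2 x).const_sub 1
      convert h using 2 with y
      · rfl
      · push_cast
        ring
      · rfl
      · norm_num
    have hd1 : HasDerivAt (deriv S) (iteratedDeriv 2 S x) x := by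
      have h := hD 1 x hx
      rwa [iteratedDeriv_one] at h
    have hprod := hcoef.mul hd1
    have hE := heq x hx
    rw [show (fun y : ℝ => ((1 - y ^ 2 : ℝ) : ℂ) * deriv S y) = (fun y : ℝ => ((1 - y ^ 2 : ℝ) : ℂ)) * deriv S from rfl, hprod.deriv] at hE
    have hds : deriv S x = iteratedDeriv 1 S x := by rw [iteratedDeriv_one]
    have hs0 : S x = iteratedDeriv 0 S x := by rw [iteratedDeriv_zero]
    rw [hds, hs0] at hE
    push_cast at hE
    -- the relation `wc 0 = ϑ · V`
    have hWV : wc s m c 𝒜 0 x = ((1:ℂ) - (x:ℂ)^2) * Vθfun s m c 𝒜 x := by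
      simp only [wc, Vθfun]
      field_simp
      ring
    show (∑ k ∈ Finset.range 1, ((0:ℕ).choose k : ℂ) * (Pc k x * iteratedDeriv (0-k+2) S x))
      + (∑ k ∈ Finset.range 1, ((0:ℕ).choose k : ℂ) * (Qc k x * iteratedDeriv (0-k+1) S x))
      + (∑ k ∈ Finset.range 1, ((0:ℕ).choose k : ℂ) * (wc s m c 𝒜 k x * iteratedDeriv (0-k) S x)) = 0
    simp only [Finset.sum_range_one, Nat.choose_self, Nat.cast_one, Nat.zero_sub, Nat.sub_zero,
      Nat.zero_add, zero_add, one_mul]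
    rw [hWV]
    simp only [Pc, Qc]
    linear_combination ((1:ℂ) - (x:ℂ)^2) * hE
  -- hence all `Tn n` vanish at `x₀`
  have hTz : ∀ n : ℕ, Tn s m c 𝒜 S n x₀ = 0 := by
    intro n
    have h1 := iterchain hU (Tn s m c 𝒜 S) hchain n x₀ hx₀
    have h2 := iter_zero_of_eqOn hU (Tn s m c 𝒜 S 0) hT0 n x₀ hx₀
    rw [h1] at h2
    exact h2
  intro n hn
  have h := hTz n
  simp only [Tn] at h
  have hsub5 : Finset.range 5 ⊆ Finset.range (n+1) := Finset.range_subset_range.mpr (by omega)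
  have hsub4 : Finset.range 4 ⊆ Finset.range (n+1) := Finset.range_subset_range.mpr (by omega)
  have hPvan : ∀ k ∈ Finset.range (n+1), k ∉ Finset.range 5 →
      (n.choose k:ℂ) * (Pc k x₀ * iteratedDeriv (n-k+2) S x₀) = 0 := by
    intro k _ hk
    rw [Finset.mem_range, not_lt] at hk
    obtain ⟨j, rfl⟩ : ∃ j, k = j + 5 := ⟨k - 5, by omega⟩
    simp [Pc]
  have hQvan : ∀ k ∈ Finset.range (n+1), k ∉ Finset.range 4 →
      (n.choose k:ℂ) * (Qc k x₀ * iteratedDeriv (n-k+1) S x₀) = 0 := by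
    intro k _ hk
    rw [Finset.mem_range, not_lt] at hk
    obtain ⟨j, rfl⟩ : ∃ j, k = j + 4 := ⟨k - 4, by omega⟩
    simp [Qc]
  have hWvan : ∀ k ∈ Finset.range (n+1), k ∉ Finset.range 5 →
      (n.choose k:ℂ) * (wc s m c 𝒜 k x₀ * iteratedDeriv (n-k) S x₀) = 0 := by
    intro k _ hk
    rw [Finset.mem_range, not_lt] at hk
    obtain ⟨j, rfl⟩ : ∃ j, k = j + 5 := ⟨k - 5, by omega⟩
    simp [wc]
  rw [← Finset.sum_subset hsub5 hPvan, ← Finset.sum_subset hsub4 hQvan,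
    ← Finset.sum_subset hsub5 hWvan] at h
  simp only [Finset.sum_range_succ, Finset.sum_range_zero, zero_add] at h
  rw [show n-0+2 = n+2 from by omega, show n-1+2 = n+1 from by omega,
    show n-2+2 = n from by omega, show n-3+2 = n-1 from by omega,
    show n-4+2 = n-2 from by omega, show n-0+1 = n+1 from by omega,
    show n-1+1 = n from by omega, show n-2+1 = n-1 from by omega,
    show n-3+1 = n-2 from by omega, show n-0 = n from by omega] at h
  rw [choose_two_cast, choose_three_cast, choose_four_cast] at h
  simp only [Nat.choose_zero_right, Nat.choose_one_right, Nat.cast_one] at h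
  simp only [Pc, Qc, wc] at h
  have hW0fun : Wθfun s m c 𝒜 = wc s m c 𝒜 0 := funext fun y => by
    simp only [Wθfun, wc]; ring
  have hW1fun : deriv (Wθfun s m c 𝒜) = wc s m c 𝒜 1 := by
    rw [hW0fun]; exact funext fun y => (wc_hasDerivAt s m c 𝒜 0 y).deriv
  have hW2fun : deriv (deriv (Wθfun s m c 𝒜)) = wc s m c 𝒜 2 := by
    rw [hW1fun]; exact funext fun y => (wc_hasDerivAt s m c 𝒜 1 y).deriv
  rw [hW2fun, hW1fun, hW0fun]
  simp only [wc]
  push_cast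
  linear_combination h
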